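/- arXiv:2002.04789 — 3 statements merged into one kernel-verified Lean document; each statement's English description precedes it below -/
import Mathlib

section
/- Let V, U be isotropic m-dimensional subspaces of R^{2n} with U⊥ ∩ V = {0} (so that the Euclidean orthogonal projection π_{V⊥} restricted to U⊥ is injective), and let u ∈ U. Then the right-coset projection P_{V⊥} restricted to the right coset 𝕌⊥*(u,0) = {(w,s)*(u,0) : w ∈ U⊥, s ∈ R} is injective, and it is a bijection onto 𝕍⊥. -/
open scoped RealInnerProductSpace
open Module
noncomputable section

/-- `ℝ^{2n}` with Euclidean norm, coordinates paired as `(j,0) ↔ x_j`, `(j,1) ↔ y_j`. -/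
abbrev Z (n : ℕ) := EuclideanSpace ℝ (Fin n × Fin 2)

/-- the standard symplectic form -/
def symp {n : ℕ} (z w : Z n) : ℝ := ∑ j : Fin n, (z (j, 0) * w (j, 1) - z (j, 1) * w (j, 0))

/-- the Heisenberg group as a set -/
abbrev H (n : ℕ) := Z n × ℝ

/-- Heisenberg group law -/
def Hmul {n : ℕ} (p q : H n) : H n := (p.1 + q.1, p.2 + q.2 + symp p.1 q.1 / 2)

/-- Heisenberg inverse -/
def Hinv {n : ℕ} (p : H n) : H n := (-p.1, -p.2)

/-- Korányi norm -/
def Knorm {n : ℕ} (p : H n) : ℝ := (‖p.1‖ ^ 4 + 16 * p.2 ^ 2) ^ ((1 : ℝ)/4)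

/-- Korányi metric -/
def dK {n : ℕ} (p q : H n) : ℝ := Knorm (Hmul (Hinv q) p)

/-- Euclidean orthogonal projection onto `V`, as a map `Z n → Z n` -/
def projV {n : ℕ} (V : Submodule ℝ (Z n)) (z : Z n) : Z n := (V.orthogonalProjectionOnto z : Z n)

/-- `V` is isotropic when the symplectic form vanishes identically on it. -/
def Isotropic {n : ℕ} (V : Submodule ℝ (Z n)) : Prop :=
  ∀ a ∈ V, ∀ b ∈ V, symp a b = 0

/-- horizontal projection `P_𝕍` -/
def PV {n : ℕ} (V : Submodule ℝ (Z n)) (p : H n) : H n := (projV V p.1, 0)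

/-- right-coset vertical projection `P_{V⊥}^R (p) = P_𝕍(p)⁻¹ * p` -/
def PR {n : ℕ} (V : Submodule ℝ (Z n)) (p : H n) : H n := Hmul (Hinv (PV V p)) p

/-- the quotient distance on `𝕍⊥`, `d_{V\Hⁿ}(p,q) = inf_{g ∈ 𝕍} d(g*p, q)` -/
def dQ {n : ℕ} (V : Submodule ℝ (Z n)) (p q : H n) : ℝ :=
  ⨅ w : V, dK (Hmul ((w : Z n), 0) p) q

/-- Euclidean distance on `Hⁿ = ℝ^{2n} × ℝ` -/
def dE {n : ℕ} (p q : H n) : ℝ := Real.sqrt (‖p.1 - q.1‖ ^ 2 + (p.2 - q.2) ^ 2)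


/-- right-coset vertical projection, explicit formula
`P_{V⊥}(z,t) = (π_{V⊥}(z), t − ½ω(π_V(z), π_{V⊥}(z)))` -/
def PRf {n : ℕ} (V : Submodule ℝ (Z n)) (p : H n) : H n :=
  (projV Vᗮ p.1, p.2 - symp (projV V p.1) (projV Vᗮ p.1) / 2)

/-!
The right coset `𝕌⊥ * (u,0)` is the vertical cylinder `(u + U⊥) × ℝ`, and in the coordinates
`(z,t)` the map `P_{V⊥}` is a shear `(z,t) ↦ (π_{V⊥} z, t - c(z))`. So everything reduces to
`π_{V⊥}` mapping `U⊥` bijectively onto `V⊥`: its kernel on `U⊥` is `U⊥ ∩ V = 0`, and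
`dim U⊥ = dim V⊥` because `dim U = dim V`.
-/

open Set

theorem Submodule.bijOn_starProjection_orthogonal {𝕜 E : Type*} [RCLike 𝕜]
    [NormedAddCommGroup E] [InnerProductSpace 𝕜 E] [FiniteDimensional 𝕜 E]
    {K L : Submodule 𝕜 E} (hKL : finrank 𝕜 K = finrank 𝕜 L) (h : Kᗮ ⊓ L = ⊥) :
    BijOn Lᗮ.starProjection Kᗮ Lᗮ := by
  have hinj : InjOn Lᗮ.starProjection Kᗮ := by
    intro a ha b hb hab
    have hL : a - b ∈ L := by
      rw [← Submodule.orthogonal_orthogonal L, ← Submodule.starProjection_apply_eq_zero_iff,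
        map_sub, hab, sub_self]
    have hab' : a - b ∈ Kᗮ ⊓ L := ⟨Kᗮ.sub_mem ha hb, hL⟩
    rwa [h, Submodule.mem_bot, sub_eq_zero] at hab'
  let f : Kᗮ →ₗ[𝕜] Lᗮ := Lᗮ.orthogonalProjectionOnto.toLinearMap ∘ₗ Kᗮ.subtype
  have hf : Function.Injective f := fun a b hab =>
    Subtype.ext (hinj a.2 b.2 (congrArg Subtype.val hab))
  have hrank : finrank 𝕜 Kᗮ = finrank 𝕜 Lᗮ := by
    have := K.finrank_add_finrank_orthogonal
    have := L.finrank_add_finrank_orthogonal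
    omega
  refine ⟨fun a _ => Lᗮ.starProjection_apply_mem a, hinj, fun y hy => ?_⟩
  obtain ⟨x, hx⟩ := (LinearMap.injective_iff_surjective_of_finrank_eq_finrank hrank).mp hf ⟨y, hy⟩
  exact ⟨x, x.2, congrArg Subtype.val hx⟩

theorem LinearMap.bijOn_setOf_sub_mem {R E F : Type*} [Ring R] [AddCommGroup E] [Module R E]
    [AddCommGroup F] [Module R F] (g : E →ₗ[R] F) {S : Submodule R E} {T : Submodule R F}
    (hg : BijOn g S T) {u : E} (hu : g u ∈ T) : BijOn g {z | z - u ∈ S} T := by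
  refine ⟨fun z hz => ?_, fun z hz z' hz' h => ?_, fun y hy => ?_⟩
  · simpa using T.add_mem (hg.mapsTo hz) hu
  · simpa using hg.injOn hz hz' (by simp [h])
  · obtain ⟨x, hx, hxy⟩ := hg.surjOn (T.sub_mem hy hu)
    exact ⟨x + u, by simpa using hx, by simp [hxy]⟩

theorem Set.BijOn.shear {α β G : Type*} [AddGroup G] {f : α → β} {s : Set α} {t : Set β}
    (hf : BijOn f s t) (c : α → G) :
    BijOn (fun p : α × G => (f p.1, p.2 - c p.1)) {p | p.1 ∈ s} {q | q.1 ∈ t} := by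
  refine ⟨fun p hp => hf.mapsTo hp, fun p hp p' hp' h => ?_, fun q hq => ?_⟩
  · obtain ⟨h1, h2⟩ := Prod.mk.inj h
    have h1' := hf.injOn hp hp' h1
    rw [h1'] at h2
    exact Prod.ext h1' (sub_left_inj.mp h2)
  · obtain ⟨a, ha, hfa⟩ := hf.surjOn hq
    exact ⟨(a, q.2 + c a), ha, by simp [hfa]⟩

theorem setOf_exists_Hmul_eq {n : ℕ} (S : Submodule ℝ (Z n)) (u : Z n) :
    {p : H n | ∃ w ∈ S, ∃ s : ℝ, p = Hmul (w, s) (u, 0)} = {p | p.1 - u ∈ S} := by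
  ext ⟨z, t⟩
  constructor
  · rintro ⟨w, hw, s, h⟩
    obtain ⟨rfl, -⟩ : z = w + u ∧ _ := by simpa [Hmul, Prod.ext_iff] using h
    simpa using hw
  · intro hz
    exact ⟨z - u, hz, t - symp (z - u) u / 2, by simp [Hmul]⟩

theorem PR_bijOn_coset_general {n m : ℕ} (V U : Submodule ℝ (Z n))
    (hVm : Module.finrank ℝ V = m) (hUm : Module.finrank ℝ U = m)
    (htrans : Uᗮ ⊓ V = ⊥) (u : Z n) :
    Set.InjOn (projV Vᗮ) (Uᗮ : Set (Z n)) ∧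
    Set.BijOn (PRf V) {p : H n | ∃ w ∈ Uᗮ, ∃ s : ℝ, p = Hmul (w, s) (u, 0)}
      {p : H n | p.1 ∈ Vᗮ} := by
  have hπ : BijOn (projV Vᗮ) Uᗮ Vᗮ :=
    Submodule.bijOn_starProjection_orthogonal (hUm.trans hVm.symm) htrans
  refine ⟨hπ.injOn, ?_⟩
  rw [setOf_exists_Hmul_eq]
  exact (Vᗮ.starProjection.toLinearMap.bijOn_setOf_sub_mem hπ
    (Vᗮ.starProjection_apply_mem u)).shear fun z => symp (projV V z) (projV Vᗮ z) / 2

/-- If `V, U` are isotropic `m`-dimensional subspaces with `U⊥ ∩ V = {0}`,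
then the Euclidean projection `π_{V⊥}` is injective on `U⊥`, and the right-coset projection
`P_{V⊥}` restricted to the right coset `𝕌⊥ * (u,0)` is a bijection onto `𝕍⊥`. -/
theorem PR_bijOn_coset {n m : ℕ} (V U : Submodule ℝ (Z n))
    (hV : Isotropic V) (hU : Isotropic U)
    (hVm : Module.finrank ℝ V = m) (hUm : Module.finrank ℝ U = m)
    (htrans : Uᗮ ⊓ V = ⊥) (u : Z n) (hu : u ∈ U) :
    Set.InjOn (projV Vᗮ) (Uᗮ : Set (Z n)) ∧
    Set.BijOn (PRf V) {p : H n | ∃ w ∈ Uᗮ, ∃ s : ℝ, p = Hmul (w, s) (u, 0)}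
      {p : H n | p.1 ∈ Vᗮ} :=
  PR_bijOn_coset_general V U hVm hUm htrans u
end
end

section
/- Let A = {s ∈ R : |s| ≤ 1/4} and let V be an isotropic subspace with a vector w₀ ∈ V, |w₀| ≤ 1, |ω(e₁,w₀)| > 1/2. Then for all s, t ∈ A, the quotient distance between the projections of (e₁,s) and (e₁,t) is comparable to |s−t|: c|s−t| ≤ inf_{w∈V} ( |w|⁴ + |s−t+ω(w,e₁)|² )^{1/4} ≤ C|s−t|, where c, C > 0 are absolute constants. -/
open scoped RealInnerProductSpace
open Module
noncomputable section

section QuarticGauge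

variable {r a : ℝ}

lemma rpow_quarter_pow_four (hr : 0 ≤ r) : (r ^ 4) ^ ((1 : ℝ) / 4) = r := by
  simpa using Real.pow_rpow_inv_natCast hr (n := 4) (by norm_num)

lemma le_rpow_quarter_pow_four_add (hr : 0 ≤ r) (a : ℝ) :
    r ≤ (r ^ 4 + a ^ 2) ^ ((1 : ℝ) / 4) := by
  conv_lhs => rw [← rpow_quarter_pow_four hr]
  gcongr
  exact le_add_of_nonneg_right (sq_nonneg a)

lemma sqrt_le_rpow_quarter_pow_four_add (r : ℝ) (ha : 0 ≤ a) :
    √a ≤ (r ^ 4 + a ^ 2) ^ ((1 : ℝ) / 4) := by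
  have hsq : (a ^ 2) ^ ((1 : ℝ) / 4) = √a := by
    rw [← Real.rpow_natCast, ← Real.rpow_mul ha, Real.sqrt_eq_rpow]
    norm_num
  rw [← hsq]
  gcongr
  exact le_add_of_nonneg_left (by positivity)

/-- If the perturbation `x` is small, `r ≥ |δ|/4` already; otherwise `|δ + x| ≥ 3|δ|/4`,
whose square root beats `|δ|/4` as long as `|δ| ≤ 12`. -/
lemma quarter_abs_le_rpow_quarter {x δ : ℝ} (hr : 0 ≤ r) (hx : |x| ≤ r) (hδ : |δ| ≤ 12) :
    1 / 4 * |δ| ≤ (r ^ 4 + |δ + x| ^ 2) ^ ((1 : ℝ) / 4) := by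
  rcases le_or_gt (1 / 4 * |δ|) r with hbig | hsmall
  · exact hbig.trans (le_rpow_quarter_pow_four_add hr _)
  · refine le_trans ?_ (sqrt_le_rpow_quarter_pow_four_add r (abs_nonneg _))
    have hshift : 3 / 4 * |δ| ≤ |δ + x| := by
      have := abs_sub_abs_le_abs_sub δ (-x)
      rw [sub_neg_eq_add, abs_neg] at this
      linarith
    rw [Real.le_sqrt (by positivity) (abs_nonneg _)]
    nlinarith [abs_nonneg δ]

end QuarticGauge

section Symplectic

variable {n : ℕ}

lemma symp_smul_left (c : ℝ) (z w : Z n) : symp (c • z) w = c * symp z w := by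
  simp only [symp, Finset.mul_sum, PiLp.smul_apply, smul_eq_mul]
  exact Finset.sum_congr rfl fun _ _ => by ring

lemma symp_swap (z w : Z n) : symp w z = -symp z w := by
  simp only [symp, ← Finset.sum_neg_distrib]
  exact Finset.sum_congr rfl fun _ _ => by ring

/-- The complex structure `J`, an isometry representing `ω(z, ·)` as `⟪J z, ·⟫`. -/
def sympRotation (z : Z n) : Z n :=
  WithLp.toLp 2 fun p => if p.2 = 0 then -z (p.1, 1) else z (p.1, 0)

lemma inner_sympRotation (z w : Z n) : ⟪sympRotation z, w⟫ = symp z w := by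
  rw [PiLp.inner_apply, Fintype.sum_prod_type, symp]
  refine Finset.sum_congr rfl fun _ _ => ?_
  simp [Fin.sum_univ_two, sympRotation]
  ring

lemma norm_sympRotation (z : Z n) : ‖sympRotation z‖ = ‖z‖ := by
  rw [EuclideanSpace.norm_eq, EuclideanSpace.norm_eq, Fintype.sum_prod_type,
    Fintype.sum_prod_type]
  congr 1
  refine Finset.sum_congr rfl fun _ _ => ?_
  simp [Fin.sum_univ_two, sympRotation]
  ring

lemma abs_symp_le (z w : Z n) : |symp z w| ≤ ‖z‖ * ‖w‖ := by
  simpa [inner_sympRotation, norm_sympRotation] using abs_real_inner_le_norm (sympRotation z) w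

lemma exists_smul_symp_eq {e w₀ : Z n} (hw₀ : ‖w₀‖ ≤ 1) (hsymp : 1 / 2 < |symp e w₀|) (δ : ℝ) :
    ∃ c : ℝ, symp (c • w₀) e = δ ∧ ‖c • w₀‖ ≤ 2 * |δ| := by
  rw [symp_swap, abs_neg] at hsymp
  have hne : symp w₀ e ≠ 0 := abs_pos.mp (by linarith)
  refine ⟨δ / symp w₀ e, by rw [symp_smul_left, div_mul_cancel₀ _ hne], ?_⟩
  have hc : |δ / symp w₀ e| ≤ 2 * |δ| := by
    rw [abs_div, div_le_iff₀ (by linarith)]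
    nlinarith [abs_nonneg δ]
  calc ‖(δ / symp w₀ e) • w₀‖ = |δ / symp w₀ e| * ‖w₀‖ := norm_smul _ _
    _ ≤ |δ / symp w₀ e| := mul_le_of_le_one_right (abs_nonneg _) hw₀
    _ ≤ 2 * |δ| := hc

end Symplectic

/-- There are absolute constants `c, C > 0` such that: whenever `e₁` is a
unit vector, `V` an isotropic subspace containing some `w₀` with `|w₀| ≤ 1` and
`|ω(e₁,w₀)| > 1/2`, and `s, t ∈ [−1/4, 1/4]`, the quotient-distance expression satisfies
`c|s−t| ≤ inf_{w∈V} (|w|⁴ + |s−t+ω(w,e₁)|²)^{1/4} ≤ C|s−t|`. -/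
theorem quotient_distance_vertical_line_comparable :
    ∃ c C : ℝ, 0 < c ∧ 0 < C ∧
      ∀ (n : ℕ) (e₁ : Z n), ‖e₁‖ = 1 →
        ∀ (V : Submodule ℝ (Z n)), Isotropic V →
          ∀ w₀ ∈ V, ‖w₀‖ ≤ 1 → 1/2 < |symp e₁ w₀| →
            ∀ s ∈ Set.Icc (-(1:ℝ)/4) (1/4), ∀ t ∈ Set.Icc (-(1:ℝ)/4) (1/4),
              c * |s - t| ≤
                  (⨅ w : V, (‖(w : Z n)‖ ^ 4 + |s - t + symp (w : Z n) e₁| ^ 2)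
                    ^ ((1 : ℝ)/4)) ∧
                (⨅ w : V, (‖(w : Z n)‖ ^ 4 + |s - t + symp (w : Z n) e₁| ^ 2)
                    ^ ((1 : ℝ)/4)) ≤ C * |s - t| := by
  refine ⟨1 / 4, 2, by norm_num, by norm_num, ?_⟩
  intro n e₁ he₁ V _ w₀ hw₀V hw₀ hsymp s ⟨hs₁, hs₂⟩ t ⟨ht₁, ht₂⟩
  have hst : |s - t| ≤ 12 := abs_le.mpr ⟨by linarith, by linarith⟩
  constructor
  · refine le_ciInf fun w => quarter_abs_le_rpow_quarter (norm_nonneg _) ?_ hst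
    simpa [he₁] using abs_symp_le (w : Z n) e₁
  · obtain ⟨c, hc, hcnorm⟩ := exists_smul_symp_eq hw₀ hsymp (-(s - t))
    have hbdd : BddBelow (Set.range fun w : V =>
        (‖(w : Z n)‖ ^ 4 + |s - t + symp (w : Z n) e₁| ^ 2) ^ ((1 : ℝ) / 4)) :=
      ⟨0, by rintro _ ⟨w, rfl⟩; positivity⟩
    refine (ciInf_le hbdd ⟨c • w₀, V.smul_mem c hw₀V⟩).trans ?_
    simp only [hc, add_neg_cancel, abs_zero, ne_eq, OfNat.ofNat_ne_zero, not_false_eq_true,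
      zero_pow, add_zero, rpow_quarter_pow_four (norm_nonneg (c • w₀))]
    simpa only [abs_neg] using hcnorm
end
end

section
/- Let μ be a finite Borel measure on R^{2n}×R supported in B(0,1) with μ(B_E(p,r)) ≤ r^σ for all p, r, where m+1 < σ, and let m+1 < s < σ. Then ∫ ( |ζ|² + τ² )^{(m−s)/2} |ζ|^{−m} dμ(ζ,τ) < ∞. -/
open scoped RealInnerProductSpace
open Module
noncomputable section

open MeasureTheory ENNReal

/-!
Split the unit ball dyadically twice: by the size `2^{-j}` of `|(ζ,τ)|` and by the size
`2^{-i-j}` of `|ζ|`. The `(i,j)` piece lies in the cylinder `|ζ| ≤ 2^{-i-j}, |τ| ≤ 2^{-j}`, which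
is covered by `2^{i+1}+1` Euclidean balls of radius `2^{1-i-j}`, so by the Frostman condition it
has measure `≲ 2^i 2^{-σ(i+j)}`. On it the kernel is `≲ 2^{j(s-m)} 2^{(i+j)m}`, and the resulting
double series `∑ 2^{i(m+1-σ)} 2^{j(s-σ)}` converges. The points with `ζ = 0` lie in infinitely many
cylinders, so the dyadic majorant is `∞` there as well.
-/

lemma tsum_ofReal_mul_pow_mul_pow_lt_top {C a b : ℝ} (hC : 0 ≤ C) (ha₀ : 0 ≤ a) (ha : a < 1)
    (hb₀ : 0 ≤ b) (hb : b < 1) :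
    ∑' p : ℕ × ℕ, ENNReal.ofReal (C * a ^ p.1 * b ^ p.2) < ⊤ := by
  have hsum : Summable fun p : ℕ × ℕ => C * a ^ p.1 * b ^ p.2 := by
    simpa only [mul_assoc] using ((summable_geometric_of_lt_one ha₀ ha).mul_of_nonneg
      (summable_geometric_of_lt_one hb₀ hb) (fun _ => by positivity)
      (fun _ => by positivity)).mul_left C
  rw [← ofReal_tsum_of_nonneg (fun _ => by positivity) hsum]
  exact ofReal_lt_top

def IsFrostman {n : ℕ} (μ : Measure (H n)) (σ : ℝ) : Prop :=
  ∀ (p : H n) (r : ℝ), 0 < r → μ {q : H n | dE q p ≤ r} ≤ ENNReal.ofReal (r ^ σ)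

def mixedKernel {n : ℕ} (α β : ℝ) (q : H n) : ℝ≥0∞ :=
  ENNReal.ofReal (dE q 0) ^ α * ENNReal.ofReal ‖q.1‖ ^ (-β)

def dyadicCylinder (n i j : ℕ) : Set (H n) :=
  {q | ‖q.1‖ ≤ (2⁻¹ : ℝ) ^ (i + j) ∧ |q.2| ≤ (2⁻¹ : ℝ) ^ j}

def dyadicWeight (α β : ℝ) (i j : ℕ) : ℝ :=
  ((2⁻¹ : ℝ) ^ (j + 1)) ^ α * ((2⁻¹ : ℝ) ^ (i + j + 1)) ^ (-β)

section

variable {n : ℕ}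

lemma dE_zero (q : H n) : dE q 0 = √(‖q.1‖ ^ 2 + q.2 ^ 2) := by
  simp [dE]

lemma ofReal_sq_add_sq_rpow_half (q : H n) (γ : ℝ) :
    ENNReal.ofReal (‖q.1‖ ^ 2 + q.2 ^ 2) ^ (γ / 2) = ENNReal.ofReal (dE q 0) ^ γ := by
  rw [dE_zero, Real.sqrt_eq_rpow, ← ofReal_rpow_of_nonneg (by positivity) (by norm_num),
    ← ENNReal.rpow_mul, one_div_mul_eq_div]

lemma norm_fst_le_dE_zero (q : H n) : ‖q.1‖ ≤ dE q 0 := by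
  rw [dE_zero]
  exact Real.le_sqrt_of_sq_le (by nlinarith [sq_nonneg q.2])

lemma abs_snd_le_dE_zero (q : H n) : |q.2| ≤ dE q 0 := by
  rw [dE_zero, ← Real.sqrt_sq_eq_abs]
  exact Real.sqrt_le_sqrt (by nlinarith [sq_nonneg ‖q.1‖])

lemma cylinder_subset_iUnion_dE_le {ρ R : ℝ} (hρ : 0 < ρ) {N : ℕ} (hR : R ≤ N * ρ) :
    {q : H n | ‖q.1‖ ≤ ρ ∧ |q.2| ≤ R} ⊆
      ⋃ k ∈ Finset.Icc (-(N : ℤ)) N, {q : H n | dE q (0, k * ρ) ≤ 2 * ρ} := by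
  rintro q ⟨hζ, hτ⟩
  obtain ⟨hτ₁, hτ₂⟩ := abs_le.1 (hτ.trans hR)
  have hk₁ : (⌊q.2 / ρ⌋ : ℝ) * ρ ≤ q.2 := (le_div_iff₀ hρ).1 (Int.floor_le _)
  have hk₂ : q.2 < ((⌊q.2 / ρ⌋ : ℝ) + 1) * ρ := (div_lt_iff₀ hρ).1 (Int.lt_floor_add_one _)
  refine Set.mem_biUnion (x := ⌊q.2 / ρ⌋)
    (Finset.mem_Icc.2 ⟨Int.le_floor.2 ?_, Int.floor_le_iff.2 ?_⟩) ?_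
  · rw [Int.cast_neg, Int.cast_natCast, le_div_iff₀ hρ]
    linarith
  · rw [Int.cast_natCast, div_lt_iff₀ hρ]
    linarith
  · simp only [Set.mem_ofPred_eq, dE, sub_zero]
    rw [Real.sqrt_le_left (by positivity)]
    nlinarith [norm_nonneg q.1]

lemma one_le_dyadicWeight {α β : ℝ} (hα : α ≤ 0) (hβ : 0 ≤ β) (i j : ℕ) :
    1 ≤ dyadicWeight α β i j := by
  have hle : ∀ k : ℕ, (2⁻¹ : ℝ) ^ k ≤ 1 := fun k => pow_le_one₀ (by norm_num) (by norm_num)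
  exact one_le_mul_of_one_le_of_one_le
    (Real.one_le_rpow_of_pos_of_le_one_of_nonpos (by positivity) (hle _) hα)
    (Real.one_le_rpow_of_pos_of_le_one_of_nonpos (by positivity) (hle _) (neg_nonpos.2 hβ))

lemma dyadicWeight_mul_eq (α β σ : ℝ) (i j : ℕ) :
    dyadicWeight α β i j * (2 ^ (i + 2) * (2 * (2⁻¹ : ℝ) ^ (i + j)) ^ σ) =
      2 ^ (β - α + σ + 2) * ((2 : ℝ) ^ (β + 1 - σ)) ^ i * ((2 : ℝ) ^ (β - α - σ)) ^ j := by
  have hpow : ∀ k : ℕ, (2⁻¹ : ℝ) ^ k = 2 ^ (-(k : ℝ)) := fun k => by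
    rw [Real.rpow_neg zero_le_two, Real.rpow_natCast, inv_pow]
  simp only [dyadicWeight, hpow, mul_comm (2 : ℝ), ← Real.rpow_add_one two_ne_zero,
    ← Real.rpow_natCast, ← Real.rpow_mul zero_le_two, ← Real.rpow_add two_pos]
  congr 1
  push_cast
  ring

lemma mixedKernel_le_dyadicWeight {α β : ℝ} (hα : α ≤ 0) (hβ : 0 ≤ β) {q : H n} {i j : ℕ}
    (hq : (2⁻¹ : ℝ) ^ (j + 1) < dE q 0) (hζ : (2⁻¹ : ℝ) ^ (i + j + 1) < ‖q.1‖) :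
    mixedKernel α β q ≤ ENNReal.ofReal (dyadicWeight α β i j) := by
  have h₁ : (0 : ℝ) < 2⁻¹ ^ (j + 1) := by positivity
  have h₂ : (0 : ℝ) < 2⁻¹ ^ (i + j + 1) := by positivity
  rw [mixedKernel, ofReal_rpow_of_pos (h₁.trans hq), ofReal_rpow_of_pos (h₂.trans hζ),
    ← ofReal_mul (Real.rpow_nonneg (h₁.trans hq).le _)]
  exact ofReal_le_ofReal (mul_le_mul (Real.rpow_le_rpow_of_nonpos h₁ hq.le hα)
    (Real.rpow_le_rpow_of_nonpos h₂ hζ.le (neg_nonpos.2 hβ)) (by positivity) (by positivity))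

lemma mixedKernel_le_tsum_indicator_dyadicCylinder {α β : ℝ} (hα : α ≤ 0) (hβ : 0 ≤ β)
    {q : H n} (hq : dE q 0 ≤ 1) :
    mixedKernel α β q ≤ ∑' p : ℕ × ℕ, (dyadicCylinder n p.1 p.2).indicator
      (fun _ => ENNReal.ofReal (dyadicWeight α β p.1 p.2)) q := by
  set g : ℕ × ℕ → ℝ≥0∞ := fun p =>
    (dyadicCylinder n p.1 p.2).indicator (fun _ => ENNReal.ofReal (dyadicWeight α β p.1 p.2)) q
  rcases eq_or_ne q.1 0 with hζ | hζ
  · have hmem : ∀ i, q ∈ dyadicCylinder n i 0 := fun i =>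
      ⟨by rw [hζ, norm_zero]; positivity, by simpa using (abs_snd_le_dE_zero q).trans hq⟩
    calc mixedKernel α β q ≤ ∑' _ : ℕ, (1 : ℝ≥0∞) := by
          rw [tsum_const_eq_top_of_ne_zero one_ne_zero]; exact le_top
      _ ≤ ∑' i : ℕ, g (i, 0) := ENNReal.tsum_le_tsum fun i => by
          simp only [g, Set.indicator_of_mem (hmem i)]
          exact one_le_ofReal.2 (one_le_dyadicWeight hα hβ i 0)
      _ ≤ ∑' p, g p := tsum_comp_le_tsum_of_injective (fun _ _ h => (Prod.ext_iff.1 h).1) g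
  · have hζpos : 0 < ‖q.1‖ := norm_pos_iff.2 hζ
    have hhalf : (2⁻¹ : ℝ) < 1 := by norm_num
    obtain ⟨j, hj₁, hj₂⟩ := exists_nat_pow_near_of_lt_one
      (hζpos.trans_le (norm_fst_le_dE_zero q)) hq (by norm_num) hhalf
    obtain ⟨k, hk₁, hk₂⟩ := exists_nat_pow_near_of_lt_one
      hζpos ((norm_fst_le_dE_zero q).trans hq) (by norm_num) hhalf
    have hjk : j ≤ k := by
      have := (pow_lt_pow_iff_right_of_lt_one₀ (by norm_num) hhalf).1
        (hk₁.trans_le ((norm_fst_le_dE_zero q).trans hj₂))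
      omega
    obtain ⟨i, rfl⟩ := Nat.exists_eq_add_of_le' hjk
    have hmem : q ∈ dyadicCylinder n i j := ⟨hk₂, (abs_snd_le_dE_zero q).trans hj₂⟩
    calc mixedKernel α β q ≤ ENNReal.ofReal (dyadicWeight α β i j) :=
          mixedKernel_le_dyadicWeight hα hβ hj₁ hk₁
      _ = g (i, j) := by simp only [g, Set.indicator_of_mem hmem]
      _ ≤ ∑' p, g p := ENNReal.le_tsum (i, j)

lemma measurableSet_dyadicCylinder (i j : ℕ) : MeasurableSet (dyadicCylinder n i j) :=
  (measurableSet_le (f := fun q : H n => ‖q.1‖) (by fun_prop) measurable_const).inter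
    (measurableSet_le (f := fun q : H n => |q.2|) (by fun_prop) measurable_const)

namespace IsFrostman

variable {μ : Measure (H n)} {σ : ℝ}

theorem measure_cylinder_le (hμ : IsFrostman μ σ) {ρ R : ℝ} (hρ : 0 < ρ) {N : ℕ}
    (hR : R ≤ N * ρ) :
    μ {q : H n | ‖q.1‖ ≤ ρ ∧ |q.2| ≤ R} ≤ ENNReal.ofReal ((2 * N + 1) * (2 * ρ) ^ σ) := by
  have hcard : (Finset.Icc (-(N : ℤ)) N).card = 2 * N + 1 := by
    rw [Int.card_Icc]
    omega
  calc μ {q : H n | ‖q.1‖ ≤ ρ ∧ |q.2| ≤ R}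
      ≤ ∑ k ∈ Finset.Icc (-(N : ℤ)) N, μ {q : H n | dE q (0, k * ρ) ≤ 2 * ρ} :=
        (measure_mono (cylinder_subset_iUnion_dE_le hρ hR)).trans (measure_biUnion_finset_le _ _)
    _ ≤ ∑ _k ∈ Finset.Icc (-(N : ℤ)) N, ENNReal.ofReal ((2 * ρ) ^ σ) :=
        Finset.sum_le_sum fun _ _ => hμ _ _ (by positivity)
    _ = ENNReal.ofReal ((2 * N + 1) * (2 * ρ) ^ σ) := by
        rw [Finset.sum_const, hcard, nsmul_eq_mul, ofReal_mul (by positivity)]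
        norm_cast

theorem measure_dyadicCylinder_le (hμ : IsFrostman μ σ) (i j : ℕ) :
    μ (dyadicCylinder n i j) ≤ ENNReal.ofReal (2 ^ (i + 2) * (2 * (2⁻¹ : ℝ) ^ (i + j)) ^ σ) := by
  have hR : (2⁻¹ : ℝ) ^ j ≤ ((2 ^ i : ℕ) : ℝ) * 2⁻¹ ^ (i + j) := by
    rw [pow_add, ← mul_assoc, Nat.cast_pow, Nat.cast_ofNat, ← mul_pow]
    norm_num
  refine (hμ.measure_cylinder_le (by positivity) hR).trans (ofReal_le_ofReal ?_)
  gcongr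
  push_cast
  rw [pow_add]
  linarith [one_le_pow₀ (M₀ := ℝ) (n := i) one_le_two]

theorem dyadicWeight_mul_measure_le (hμ : IsFrostman μ σ) (α β : ℝ) (i j : ℕ) :
    ENNReal.ofReal (dyadicWeight α β i j) * μ (dyadicCylinder n i j) ≤
      ENNReal.ofReal
        (2 ^ (β - α + σ + 2) * ((2 : ℝ) ^ (β + 1 - σ)) ^ i * ((2 : ℝ) ^ (β - α - σ)) ^ j) := by
  rw [← dyadicWeight_mul_eq, ofReal_mul (by unfold dyadicWeight; positivity)]
  gcongr
  exact hμ.measure_dyadicCylinder_le i j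

theorem lintegral_mixedKernel_lt_top {α β : ℝ} (hμ : IsFrostman μ σ)
    (hsupp : μ {q : H n | 1 < dE q 0} = 0) (hα : α ≤ 0) (hβ : 0 ≤ β) (hβσ : β + 1 < σ)
    (hαβσ : β - α < σ) :
    ∫⁻ q, mixedKernel α β q ∂μ < ⊤ := by
  have hball : ∀ᵐ q ∂μ, dE q 0 ≤ 1 := by
    simpa only [ae_iff, not_le] using hsupp
  have hlt_one : ∀ {x : ℝ}, x < 0 → (2 : ℝ) ^ x < 1 :=
    Real.rpow_lt_one_of_one_lt_of_neg one_lt_two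
  calc ∫⁻ q, mixedKernel α β q ∂μ
      ≤ ∫⁻ q, ∑' p : ℕ × ℕ, (dyadicCylinder n p.1 p.2).indicator
          (fun _ => ENNReal.ofReal (dyadicWeight α β p.1 p.2)) q ∂μ :=
        lintegral_mono_ae <|
          hball.mono fun _ => mixedKernel_le_tsum_indicator_dyadicCylinder hα hβ
    _ = ∑' p : ℕ × ℕ,
          ENNReal.ofReal (dyadicWeight α β p.1 p.2) * μ (dyadicCylinder n p.1 p.2) := by
        rw [lintegral_tsum fun p : ℕ × ℕ =>
          (measurable_const.indicator (measurableSet_dyadicCylinder p.1 p.2)).aemeasurable]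
        exact tsum_congr fun p => lintegral_indicator_const (measurableSet_dyadicCylinder _ _) _
    _ ≤ ∑' p : ℕ × ℕ, ENNReal.ofReal
          (2 ^ (β - α + σ + 2) * ((2 : ℝ) ^ (β + 1 - σ)) ^ p.1 * ((2 : ℝ) ^ (β - α - σ)) ^ p.2) :=
        ENNReal.tsum_le_tsum fun p => hμ.dyadicWeight_mul_measure_le α β p.1 p.2
    _ < ⊤ := tsum_ofReal_mul_pow_mul_pow_lt_top (by positivity) (by positivity)
        (hlt_one (by linarith)) (by positivity) (hlt_one (by linarith))

end IsFrostman

end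

theorem mixed_kernel_integrable_general {n : ℕ} (m : ℕ) (σ s : ℝ)
    (hs : (m : ℝ) + 1 < s) (hsσ : s < σ)
    (μ : Measure (H n))
    (hsupp : μ {q : H n | 1 < dE q 0} = 0)
    (hfrost : ∀ (p : H n) (r : ℝ), 0 < r → μ {q : H n | dE q p ≤ r} ≤ ENNReal.ofReal (r ^ σ)) :
    ∫⁻ q : H n, (ENNReal.ofReal (‖q.1‖ ^ 2 + q.2 ^ 2)) ^ (((m : ℝ) - s) / 2)
        * (ENNReal.ofReal ‖q.1‖) ^ (-(m : ℝ)) ∂μ < ⊤ := by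
  simp_rw [ofReal_sq_add_sq_rpow_half]
  exact IsFrostman.lintegral_mixedKernel_lt_top (α := m - s) (β := m) hfrost hsupp
    (by linarith) m.cast_nonneg (by linarith) (by linarith)

/-- If `μ` is a finite Borel measure on `ℝ^{2n}×ℝ` supported in `B(0,1)`
with Frostman exponent `σ`, and `m+1 < s < σ`, then
`∫ (|ζ|² + τ²)^{(m−s)/2} |ζ|^{−m} dμ(ζ,τ) < ∞`
(the integrand being `+∞` at points where the relevant base vanishes). -/
theorem mixed_kernel_integrable {n : ℕ} (m : ℕ) (hm : 1 ≤ m) (σ s : ℝ)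
    (hσ : (m : ℝ) + 1 < σ) (hs : (m : ℝ) + 1 < s) (hsσ : s < σ)
    (μ : Measure (H n)) [IsFiniteMeasure μ]
    (hsupp : μ {q : H n | 1 < dE q 0} = 0)
    (hfrost : ∀ (p : H n) (r : ℝ), 0 < r → μ {q : H n | dE q p ≤ r} ≤ ENNReal.ofReal (r ^ σ)) :
    ∫⁻ q : H n, (ENNReal.ofReal (‖q.1‖ ^ 2 + q.2 ^ 2)) ^ (((m : ℝ) - s) / 2)
        * (ENNReal.ofReal ‖q.1‖) ^ (-(m : ℝ)) ∂μ < ⊤ :=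
  mixed_kernel_integrable_general m σ s hs hsσ μ hsupp hfrost
end
end
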